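/- For any real number M > 1, the set of operators T ∈ B_M(H) having no eigenvalue (i.e., such that there is no λ ∈ ℂ and nonzero x ∈ H with Tx = λx) is a dense Gδ subset of the topological space (B_M(H), SOT*). -/

import Mathlib

/-!
Density. Given `T` and a finite set `J`, let `F` be a finite-dimensional subspace containing `J`,
`T J` and `T* J`, and take a Hilbert basis `b (n, j)` of `H` whose level `n = 0` spans `F`. With
`U` the shift `b (n, j) ↦ b (n + 1, j)` and `P` the projection onto `F`, the operator
`S = M U (1 - t P) + t P T P` has norm at most `M`, and `S`, `S*` agree with `T`, `T*` on `J` up to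
`O(1 - t)`. For `t < 1` it has no eigenvalue: along each column `b (·, j)` the coordinates of an
eigenvector satisfy `λ c (n + 1) = M c n` for `n ≥ 1`, where `|λ| ≤ M`, so they do not decrease,
and being square-summable they vanish.

Gδ. A nonzero eigenvector `x` lies in `closedBall y (‖y‖ / 2)` for some `y ≠ 0` of a countable
dense set. For fixed `y`, the operators with an eigenvector in that ball form an SOT*-closed set:
it is the projection, along a factor that is compact by Banach–Alaoglu, of a closed subset of
`B_M(H) × H' × ℂ`. Closedness of the eigenvector equation there rests on the continuity of the
pairing between bounded weak-* convergent functionals and norm convergent vectors.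
-/

/-- The strong-star operator topology (SOT*) on the closed ball
`B_M(H) = {T : ‖T‖ ≤ M}`: the topology induced by the map
`T ↦ ((Tx)_{x ∈ H}, (T*x)_{x ∈ H})` into `(H → H) × (H → H)` with the product topology. -/
noncomputable def sotStar {H : Type*} [NormedAddCommGroup H] [InnerProductSpace ℂ H]
    [CompleteSpace H] (M : ℝ) :
    TopologicalSpace {T : H →L[ℂ] H // ‖T‖ ≤ M} :=
  TopologicalSpace.induced
    (fun T => ((fun x => T.1 x, fun x => (ContinuousLinearMap.adjoint T.1) x) :
      (H → H) × (H → H)))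
    inferInstance

open Filter Set Topology Metric Submodule
open scoped InnerProductSpace

section HilbertSpace

variable {𝕜 E : Type*} [RCLike 𝕜] [NormedAddCommGroup E] [InnerProductSpace 𝕜 E]

theorem norm_add_sq_of_inner_eq_zero {x y : E} (h : ⟪x, y⟫_𝕜 = 0) :
    ‖x + y‖ ^ 2 = ‖x‖ ^ 2 + ‖y‖ ^ 2 := by
  simp [@norm_add_sq 𝕜, h]

theorem Submodule.mem_orthogonal_span_iff {s : Set E} {v : E} :
    v ∈ (span 𝕜 s)ᗮ ↔ ∀ u ∈ s, ⟪u, v⟫_𝕜 = 0 := by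
  refine ⟨fun h u hu => inner_right_of_mem_orthogonal (subset_span hu) h, fun h => ?_⟩
  exact (isOrtho_span.2 fun w (hw : w = v) u hu => by rw [hw, inner_eq_zero_symm]; exact h u hu).le
    (mem_span_singleton_self v)

theorem ContinuousLinearMap.norm_le_of_apply_eq_smul {S : E →L[𝕜] E} {c : 𝕜} {x : E}
    (hx : S x = c • x) (hx₀ : x ≠ 0) : ‖c‖ ≤ ‖S‖ := by
  refine le_of_mul_le_mul_right ?_ (norm_pos_iff.2 hx₀)
  rw [← norm_smul, ← hx]
  exact S.le_opNorm x

theorem Orthonormal.countable_of_separableSpace [TopologicalSpace.SeparableSpace E]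
    {ι : Type*} {v : ι → E} (hv : Orthonormal 𝕜 v) : Countable ι := by
  refine Pairwise.countable_of_isOpen_disjoint (s := fun i => ball (v i) (1 / 2))
    (fun i j hij => ball_disjoint_ball ?_) (fun _ => isOpen_ball)
    (fun i => nonempty_ball.2 (by norm_num))
  have h2 : ‖v i - v j‖ ^ 2 = 2 := by
    rw [@norm_sub_sq 𝕜, hv.1 i, hv.1 j, hv.2 hij]
    norm_num
  rw [dist_eq_norm]
  nlinarith [norm_nonneg (v i - v j)]

namespace HilbertBasis

variable {ι : Type*}

theorem infinite_of_not_finiteDimensional (b : HilbertBasis ι 𝕜 E)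
    (hE : ¬ FiniteDimensional 𝕜 E) : Infinite ι := by
  by_contra h
  have : Fintype ι := @Fintype.ofFinite ι (not_infinite_iff_finite.1 h)
  exact hE b.toOrthonormalBasis.toBasis.finiteDimensional_of_finite

theorem tendsto_inner_cofinite (b : HilbertBasis ι 𝕜 E) (x : E) :
    Tendsto (fun i => ⟪b i, x⟫_𝕜) cofinite (𝓝 0) := by
  have h := b.orthonormal.inner_products_summable x |>.tendsto_cofinite_zero
  rw [tendsto_zero_iff_norm_tendsto_zero]
  simpa using h.sqrt

theorem eq_zero_of_forall_inner_eq_zero (b : HilbertBasis ι 𝕜 E) {x : E}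
    (h : ∀ i, ⟪b i, x⟫_𝕜 = 0) : x = 0 := by
  have hrepr : HasSum (fun i => b.repr x i • b i) 0 := by
    simp only [b.repr_apply_apply, h, zero_smul]
    exact hasSum_zero
  exact (b.hasSum_repr x).unique hrepr

variable [CompleteSpace E]

noncomputable def shift (b : HilbertBasis ι 𝕜 E) {σ : ι → ι} (hσ : σ.Injective) :
    E →ₗᵢ[𝕜] E :=
  (b.orthonormal.comp σ hσ).orthogonalFamily.linearIsometry.comp b.repr.toLinearIsometry

variable (b : HilbertBasis ι 𝕜 E) {σ : ι → ι} (hσ : σ.Injective)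

theorem shift_apply (i : ι) : b.shift hσ (b i) = b (σ i) := by
  classical
  simp [shift, b.repr_self, OrthogonalFamily.linearIsometry_apply_single]

theorem inner_shift_apply (i : ι) (x : E) : ⟪b (σ i), b.shift hσ x⟫_𝕜 = ⟪b i, x⟫_𝕜 := by
  rw [← shift_apply b hσ, LinearIsometry.inner_map_map]

theorem inner_shift_eq_zero {i : ι} (hi : i ∉ range σ) (x : E) : ⟪b i, b.shift hσ x⟫_𝕜 = 0 := by
  have h := ((b.hasSum_repr x).mapL (b.shift hσ).toContinuousLinearMap).mapL (innerSL 𝕜 (b i))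
  refine h.unique ?_
  convert hasSum_zero with j
  have hne : i ≠ σ j := fun h => hi ⟨j, h.symm⟩
  simp [shift_apply, b.orthonormal.2 hne]

end HilbertBasis

theorem exists_equiv_nat_prod {α κ : Type*} [Countable α] [Infinite α] [Finite κ] [Nonempty κ]
    (g : κ ↪ α) : ∃ e : ℕ × κ ≃ α, ∀ j, e (0, j) = g j := by
  classical
  have : Infinite {a // a ∉ range g} := (finite_range g).infinite_compl.to_subtype
  obtain ⟨_⟩ := nonempty_denumerable {a // a ∉ range g}
  obtain ⟨_⟩ := nonempty_denumerable (ℕ × κ)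
  let next : ℕ × κ ≃ κ ⊕ ℕ × κ :=
    ((Equiv.natEquivNatSumPUnit.{0}.trans (Equiv.optionEquivSumPUnit ℕ).symm).prodCongr
      (Equiv.refl κ)).trans optionProdEquiv
  exact ⟨next.trans ((Equiv.sumCongr (Equiv.ofInjective g g.injective)
    (Denumerable.equiv₂ _ _)).trans (Equiv.sumCompl (· ∈ range g))), fun j => rfl⟩

theorem exists_hilbertBasis_nat_prod_fin [CompleteSpace E] [TopologicalSpace.SeparableSpace E]
    (hE : ¬ FiniteDimensional 𝕜 E) (F : Submodule 𝕜 E) [FiniteDimensional 𝕜 F] [Nontrivial F] :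
    ∃ (d : ℕ) (b : HilbertBasis (ℕ × Fin d) 𝕜 E), span 𝕜 (range fun j => b (0, j)) = F := by
  set f := stdOrthonormalBasis 𝕜 F
  set v : Fin (Module.finrank 𝕜 F) → E := fun j => f j
  have hv : Orthonormal 𝕜 v := f.orthonormal.comp_linearIsometry F.subtypeₗᵢ
  obtain ⟨w, bw, hvw, hbw⟩ := hv.toSubtypeRange.exists_hilbertBasis_extension
  have := bw.orthonormal.countable_of_separableSpace
  have := bw.infinite_of_not_finiteDimensional hE
  have : Nonempty (Fin (Module.finrank 𝕜 F)) := Fin.pos_iff_nonempty.1 Module.finrank_pos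
  obtain ⟨e, he⟩ := exists_equiv_nat_prod
    ⟨fun j => (⟨v j, hvw (mem_range_self j)⟩ : w), fun i j h =>
      hv.linearIndependent.injective (congrArg ((↑) : w → E) h)⟩
  have hspan : ⊤ ≤ (span 𝕜 (range (bw ∘ e))).topologicalClosure := by
    rw [EquivLike.range_comp, bw.dense_span]
  refine ⟨_, .mk (bw.orthonormal.comp e e.injective) hspan, ?_⟩
  have hb0 : (fun j => HilbertBasis.mk (bw.orthonormal.comp e e.injective) hspan (0, j)) = v := by
    ext1 j
    simp only [HilbertBasis.coe_mk, Function.comp_apply, he, hbw]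
    rfl
  rw [hb0, show range v = F.subtype '' range f by rw [← range_comp]; rfl, span_image,
    ← f.coe_toBasis, f.toBasis.span_eq, map_subtype_top]

theorem exists_hilbertBasis_nat_prod_fin_and_shift [CompleteSpace E]
    [TopologicalSpace.SeparableSpace E] (hE : ¬ FiniteDimensional 𝕜 E) (F : Submodule 𝕜 E)
    [FiniteDimensional 𝕜 F] [Nontrivial F] :
    ∃ (d : ℕ) (b : HilbertBasis (ℕ × Fin d) 𝕜 E) (U : E →ₗᵢ[𝕜] E),
      (∀ j, b (0, j) ∈ F) ∧ (∀ n j, b (n + 1, j) ∈ Fᗮ) ∧ (∀ x, U x ∈ Fᗮ) ∧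
        ∀ n j x, ⟪b (n + 1, j), U x⟫_𝕜 = ⟪b (n, j), x⟫_𝕜 := by
  obtain ⟨d, b, hbF⟩ := exists_hilbertBasis_nat_prod_fin hE F
  have hσ : (Prod.map Nat.succ id : ℕ × Fin d → ℕ × Fin d).Injective :=
    Nat.succ_injective.prodMap Function.injective_id
  refine ⟨d, b, b.shift hσ, fun j => hbF ▸ subset_span ⟨j, rfl⟩, fun n j => ?_, fun x => ?_,
    fun n j => b.inner_shift_apply hσ (n, j)⟩
  · rw [← hbF, mem_orthogonal_span_iff]
    rintro _ ⟨k, rfl⟩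
    exact b.orthonormal.2 (by simp)
  · rw [← hbF, mem_orthogonal_span_iff]
    rintro _ ⟨k, rfl⟩
    exact b.inner_shift_eq_zero hσ (by simp) x

theorem eq_zero_of_forall_mul_succ_eq {c w : ℕ → 𝕜} {μ : 𝕜} (hc : Tendsto c atTop (𝓝 0))
    (hw : ∀ n, w n ≠ 0) (hμ : ∀ n, ‖μ‖ ≤ ‖w (n + 1)‖) (h : ∀ n, μ * c (n + 1) = w n * c n)
    (n : ℕ) : c n = 0 := by
  have hsucc : ∀ n, c (n + 1) = 0 := by
    rcases eq_or_ne μ 0 with rfl | hμ₀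
    · intro n
      simpa [hw] using (h (n + 1)).symm
    · have hmono : Monotone fun n => ‖c (n + 1)‖ := monotone_nat_of_le_succ fun n => by
        refine le_of_mul_le_mul_left ?_ (norm_pos_iff.2 hμ₀)
        calc ‖μ‖ * ‖c (n + 1)‖ ≤ ‖w (n + 1)‖ * ‖c (n + 1)‖ := by gcongr; exact hμ n
          _ = ‖μ‖ * ‖c (n + 1 + 1)‖ := by rw [← norm_mul, ← h (n + 1), norm_mul]
      have hlim : Tendsto (fun n => ‖c (n + 1)‖) atTop (𝓝 0) := by
        simpa using ((tendsto_add_atTop_iff_nat 1).2 hc).norm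
      exact fun n => norm_le_zero_iff.1 (hmono.ge_of_tendsto hlim n)
  cases n with
  | zero => simpa [hsucc, hw 0] using (h 0).symm
  | succ n => exact hsucc n

section PerturbedShift

variable (F : Submodule 𝕜 E) [F.HasOrthogonalProjection]
  (U : E →ₗᵢ[𝕜] E) (T : E →L[𝕜] E) (M t : ℝ)

noncomputable def perturbedShift : E →L[𝕜] E :=
  (M : 𝕜) • (U.toContinuousLinearMap ∘L (1 - (t : 𝕜) • F.starProjection)) +
    (t : 𝕜) • (F.starProjection ∘L T ∘L F.starProjection)

variable {F U T M t}

theorem perturbedShift_apply (x : E) : perturbedShift F U T M t x =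
    (M : 𝕜) • U (x - (t : 𝕜) • F.starProjection x) +
      (t : 𝕜) • F.starProjection (T (F.starProjection x)) := rfl

theorem norm_perturbedShift_le (hU : ∀ x, U x ∈ Fᗮ) (hT : ‖T‖ ≤ M) (ht₀ : 0 ≤ t) (ht₁ : t ≤ 1) :
    ‖perturbedShift F U T M t‖ ≤ M := by
  have hM : 0 ≤ M := (norm_nonneg T).trans hT
  refine (perturbedShift F U T M t).opNorm_le_bound hM fun x => ?_
  set p := F.starProjection x
  set q := Fᗮ.starProjection x
  have hx : ‖x‖ ^ 2 = ‖p‖ ^ 2 + ‖q‖ ^ 2 := by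
    rw [← norm_add_sq_of_inner_eq_zero (inner_right_of_mem_orthogonal
      (F.starProjection_apply_mem x) (Fᗮ.starProjection_apply_mem x)),
      starProjection_add_starProjection_orthogonal]
  have hz : ‖x - (t : 𝕜) • p‖ ^ 2 = (1 - t) ^ 2 * ‖p‖ ^ 2 + ‖q‖ ^ 2 := by
    have : x - (t : 𝕜) • p = ((1 - t : ℝ) : 𝕜) • p + q := by
      rw [show q = x - p from starProjection_orthogonal_val x]
      push_cast
      module
    rw [this, norm_add_sq_of_inner_eq_zero (inner_right_of_mem_orthogonal
      (F.smul_mem _ (F.starProjection_apply_mem x)) (Fᗮ.starProjection_apply_mem x)),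
      norm_smul, RCLike.norm_ofReal, mul_pow, sq_abs]
  have hTp : ‖F.starProjection (T p)‖ ≤ M * ‖p‖ :=
    (F.norm_starProjection_apply_le _).trans ((T.le_opNorm p).trans (by gcongr))
  have hSx : ‖perturbedShift F U T M t x‖ ^ 2 =
      M ^ 2 * ‖x - (t : 𝕜) • p‖ ^ 2 + t ^ 2 * ‖F.starProjection (T p)‖ ^ 2 := by
    rw [perturbedShift_apply, add_comm, norm_add_sq_of_inner_eq_zero
      (inner_right_of_mem_orthogonal (F.smul_mem _ (F.starProjection_apply_mem _))
        (Fᗮ.smul_mem _ (hU _))), norm_smul, norm_smul, RCLike.norm_ofReal, RCLike.norm_ofReal,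
      U.norm_map, abs_of_nonneg hM, abs_of_nonneg ht₀]
    ring
  rw [← pow_le_pow_iff_left₀ (norm_nonneg _) (by positivity) two_ne_zero, hSx, hz, mul_pow, hx]
  have : t ^ 2 * ‖F.starProjection (T p)‖ ^ 2 ≤ t ^ 2 * (M * ‖p‖) ^ 2 := by gcongr
  nlinarith [mul_nonneg (mul_nonneg ht₀ (sub_nonneg.2 ht₁)) (sq_nonneg (M * ‖p‖))]

theorem perturbedShift_apply_of_mem {y : E} (hy : y ∈ F) (hTy : T y ∈ F) :
    perturbedShift F U T M t y = ((M * (1 - t) : ℝ) : 𝕜) • U y + (t : 𝕜) • T y := by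
  rw [perturbedShift_apply, F.starProjection_eq_self_iff.2 hy, F.starProjection_eq_self_iff.2 hTy,
    map_sub, map_smul]
  push_cast
  module

theorem adjoint_perturbedShift_apply_of_mem [CompleteSpace E] (hU : ∀ x, U x ∈ Fᗮ) {y : E}
    (hy : y ∈ F) (hTy : T.adjoint y ∈ F) :
    (perturbedShift F U T M t).adjoint y = (t : 𝕜) • T.adjoint y := by
  refine ext_inner_right 𝕜 fun x => ?_
  rw [ContinuousLinearMap.adjoint_inner_left, perturbedShift_apply, inner_add_right,
    inner_smul_right, inner_smul_right, inner_right_of_mem_orthogonal hy (hU _), mul_zero, zero_add,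
    ← F.inner_starProjection_left_eq_right, F.starProjection_eq_self_iff.2 hy,
    ← ContinuousLinearMap.adjoint_inner_left, ← F.inner_starProjection_left_eq_right,
    F.starProjection_eq_self_iff.2 hTy, inner_smul_left, RCLike.conj_ofReal]

theorem tendsto_perturbedShift_apply_of_mem {y : E} (hy : y ∈ F) (hTy : T y ∈ F) :
    Tendsto (fun t => perturbedShift F U T M t y) (𝓝 1) (𝓝 (T y)) := by
  refine Tendsto.congr (fun t => (perturbedShift_apply_of_mem hy hTy).symm) ?_
  convert (by fun_prop : Continuous fun t : ℝ =>
    ((M * (1 - t) : ℝ) : 𝕜) • U y + (t : 𝕜) • T y).tendsto 1 using 2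
  simp

theorem tendsto_adjoint_perturbedShift_apply_of_mem [CompleteSpace E] (hU : ∀ x, U x ∈ Fᗮ)
    {y : E} (hy : y ∈ F) (hTy : T.adjoint y ∈ F) :
    Tendsto (fun t => (perturbedShift F U T M t).adjoint y) (𝓝 1) (𝓝 (T.adjoint y)) := by
  refine Tendsto.congr (fun t => (adjoint_perturbedShift_apply_of_mem hU hy hTy).symm) ?_
  convert (by fun_prop : Continuous fun t : ℝ => (t : 𝕜) • T.adjoint y).tendsto 1 using 2
  simp

theorem inner_perturbedShift_succ {κ : Type*} (b : HilbertBasis (ℕ × κ) 𝕜 E)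
    (hb₀ : ∀ j, b (0, j) ∈ F) (hb₁ : ∀ n j, b (n + 1, j) ∈ Fᗮ)
    (hU : ∀ n j x, ⟪b (n + 1, j), U x⟫_𝕜 = ⟪b (n, j), x⟫_𝕜) (n : ℕ) (j : κ) (x : E) :
    ⟪b (n + 1, j), perturbedShift F U T M t x⟫_𝕜 =
      ((M * (1 - if n = 0 then t else 0) : ℝ) : 𝕜) * ⟪b (n, j), x⟫_𝕜 := by
  rw [perturbedShift_apply, inner_add_right, inner_smul_right, inner_smul_right,
    inner_left_of_mem_orthogonal (F.starProjection_apply_mem _) (hb₁ n j), mul_zero, add_zero, hU,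
    inner_sub_right, inner_smul_right, ← F.inner_starProjection_left_eq_right]
  cases n with
  | zero => rw [F.starProjection_eq_self_iff.2 (hb₀ j)]; push_cast; ring
  | succ n => rw [F.starProjection_apply_eq_zero_iff.2 (hb₁ n j), inner_zero_left]; push_cast; ring

theorem eq_zero_of_perturbedShift_apply_eq_smul {κ : Type*} (b : HilbertBasis (ℕ × κ) 𝕜 E)
    (hb₀ : ∀ j, b (0, j) ∈ F) (hb₁ : ∀ n j, b (n + 1, j) ∈ Fᗮ)
    (hU : ∀ n j x, ⟪b (n + 1, j), U x⟫_𝕜 = ⟪b (n, j), x⟫_𝕜) (hM : 0 < M) (ht : t < 1)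
    (hS : ‖perturbedShift F U T M t‖ ≤ M) {c : 𝕜} {x : E}
    (hx : perturbedShift F U T M t x = c • x) : x = 0 := by
  by_contra hx₀
  have hc : ‖c‖ ≤ M := (ContinuousLinearMap.norm_le_of_apply_eq_smul hx hx₀).trans hS
  refine hx₀ (b.eq_zero_of_forall_inner_eq_zero fun ⟨n, j⟩ => ?_)
  refine eq_zero_of_forall_mul_succ_eq (c := fun n => ⟪b (n, j), x⟫_𝕜)
    (w := fun n => ((M * (1 - if n = 0 then t else 0) : ℝ) : 𝕜)) (μ := c) ?_ (fun n => ?_)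
    (fun n => ?_) (fun n => ?_) n
  · have hinj : (fun n : ℕ => (n, j)).Injective := fun _ _ h => (Prod.mk.inj h).1
    rw [← Nat.cofinite_eq_atTop]
    exact (b.tendsto_inner_cofinite x).comp hinj.tendsto_cofinite
  · have : 0 < 1 - if n = 0 then t else 0 := by split_ifs <;> linarith
    exact_mod_cast (mul_pos hM this).ne'
  · simpa [abs_of_pos hM] using hc
  · rw [← inner_perturbedShift_succ b hb₀ hb₁ hU, hx, inner_smul_right]

end PerturbedShift

theorem exists_noEigenvalue_approx [CompleteSpace E] [TopologicalSpace.SeparableSpace E]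
    (hE : ¬ FiniteDimensional 𝕜 E) {M : ℝ} (hM : 0 < M) {T : E →L[𝕜] E} (hT : ‖T‖ ≤ M)
    (J : Finset E) {ε : ℝ} (hε : 0 < ε) :
    ∃ S : E →L[𝕜] E, ‖S‖ ≤ M ∧ (∀ (c : 𝕜) (x : E), S x = c • x → x = 0) ∧
      ∀ y ∈ J, dist (S y) (T y) < ε ∧ dist (S.adjoint y) (T.adjoint y) < ε := by
  have : Nontrivial E := by
    by_contra h
    rw [not_nontrivial_iff_subsingleton] at h
    exact hE inferInstance
  obtain ⟨z, hz⟩ := exists_ne (0 : E)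
  set F := span 𝕜 ((J : Set E) ∪ T '' J ∪ T.adjoint '' J ∪ {z})
  have : FiniteDimensional 𝕜 F := FiniteDimensional.span_of_finite 𝕜 (toFinite _)
  have : Nontrivial F :=
    nontrivial_iff_ne_bot.2 ((Submodule.ne_bot_iff _).2 ⟨z, subset_span (by simp), hz⟩)
  obtain ⟨d, b, U, hb₀, hb₁, hUF, hUb⟩ := exists_hilbertBasis_nat_prod_fin_and_shift hE F
  have hev : ∀ᶠ t in 𝓝[<] (1 : ℝ), t ∈ Ioo 0 1 ∧ ∀ y ∈ J,
      dist (perturbedShift F U T M t y) (T y) < ε ∧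
      dist ((perturbedShift F U T M t).adjoint y) (T.adjoint y) < ε := by
    refine Filter.inter_mem (Ioo_mem_nhdsLT zero_lt_one) ((Finset.eventually_all _).2 fun y hy =>
      Filter.Eventually.filter_mono nhdsWithin_le_nhds ?_)
    have hyF : y ∈ F := subset_span (.inl (.inl (.inl hy)))
    have hTyF : T y ∈ F := subset_span (.inl (.inl (.inr ⟨y, hy, rfl⟩)))
    have hTayF : T.adjoint y ∈ F := subset_span (.inl (.inr ⟨y, hy, rfl⟩))
    exact ((tendsto_perturbedShift_apply_of_mem hyF hTyF).eventually (ball_mem_nhds _ hε)).and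
      ((tendsto_adjoint_perturbedShift_apply_of_mem hUF hyF hTayF).eventually
        (ball_mem_nhds _ hε))
  obtain ⟨t, ⟨ht₀, ht₁⟩, hJ⟩ := hev.exists
  have hS := norm_perturbedShift_le hUF hT ht₀.le ht₁.le
  exact ⟨_, hS, fun c x hx => eq_zero_of_perturbedShift_apply_eq_smul b hb₀ hb₁ hUb hM ht₁ hS hx,
    hJ⟩

end HilbertSpace

theorem WeakDual.continuousOn_apply_of_norm_le {𝕜 V X : Type*} [RCLike 𝕜] [NormedAddCommGroup V]
    [NormedSpace 𝕜 V] [TopologicalSpace X] {g : X → V} (hg : Continuous g) (R : ℝ) :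
    ContinuousOn (fun p : X × WeakDual 𝕜 V => p.2 (g p.1)) {p | ‖toStrongDual p.2‖ ≤ R} := by
  rintro ⟨x₀, φ₀⟩ -
  have hsmall : Tendsto (fun p : X × WeakDual 𝕜 V => p.2 (g p.1 - g x₀))
      (𝓝[{p | ‖toStrongDual p.2‖ ≤ R}] (x₀, φ₀)) (𝓝 0) := by
    refine squeeze_zero_norm' (eventually_nhdsWithin_of_forall fun p (hp : _ ≤ R) =>
      ((toStrongDual p.2).le_opNorm _).trans (mul_le_mul_of_nonneg_right hp (norm_nonneg _))) ?_
    have : Tendsto (fun p : X × WeakDual 𝕜 V => g p.1 - g x₀) (𝓝 (x₀, φ₀)) (𝓝 0) := by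
      simpa using ((hg.comp continuous_fst).tendsto (x₀, φ₀)).sub_const (g x₀)
    simpa using (this.norm.const_mul R).mono_left nhdsWithin_le_nhds
  have hbase : Tendsto (fun p : X × WeakDual 𝕜 V => p.2 (g x₀))
      (𝓝[{p | ‖toStrongDual p.2‖ ≤ R}] (x₀, φ₀)) (𝓝 (φ₀ (g x₀))) :=
    (((WeakDual.eval_continuous (g x₀)).comp continuous_snd).tendsto (x₀, φ₀)).mono_left
      nhdsWithin_le_nhds
  simpa [ContinuousWithinAt] using hsmall.add hbase

section SotStar

variable {H : Type*} [NormedAddCommGroup H] [InnerProductSpace ℂ H] [CompleteSpace H] {M : ℝ}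

attribute [local instance] sotStar

theorem continuous_sotStar :
    Continuous fun T : {T : H →L[ℂ] H // ‖T‖ ≤ M} =>
      ((fun x => T.1 x, fun x => T.1.adjoint x) : (H → H) × (H → H)) :=
  continuous_induced_dom

theorem continuous_sotStar_adjoint_apply (x : H) :
    Continuous fun T : {T : H →L[ℂ] H // ‖T‖ ≤ M} => T.1.adjoint x :=
  (continuous_apply x).comp (continuous_snd.comp continuous_sotStar)

theorem mem_closure_sotStar {s : Set {T : H →L[ℂ] H // ‖T‖ ≤ M}} {T : {T : H →L[ℂ] H // ‖T‖ ≤ M}}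
    (h : ∀ (J : Finset H) (ε : ℝ), 0 < ε → ∃ S ∈ s, ∀ y ∈ J,
      dist (S.1 y) (T.1 y) < ε ∧ dist (S.1.adjoint y) (T.1.adjoint y) < ε) :
    T ∈ closure s := by
  classical
  refine mem_closure_iff_nhds.2 fun V hV => ?_
  rw [sotStar, nhds_induced, nhds_prod_eq, nhds_pi, nhds_pi] at hV
  obtain ⟨u, hu, huV⟩ := mem_comap.1 hV
  obtain ⟨u₁, hu₁, u₂, hu₂, hu⟩ := mem_prod_iff.1 hu
  obtain ⟨I₁, t₁, ht₁, hI₁⟩ := mem_pi'.1 hu₁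
  obtain ⟨I₂, t₂, ht₂, hI₂⟩ := mem_pi'.1 hu₂
  have hball {p : H} {t : Set H} (ht : t ∈ 𝓝 p) : ∀ᶠ ε in 𝓝[>] (0 : ℝ), ball p ε ⊆ t := by
    obtain ⟨r, hr, hrt⟩ := Metric.mem_nhds_iff.1 ht
    filter_upwards [Ioo_mem_nhdsGT hr] with ε hε using (ball_subset_ball hε.2.le).trans hrt
  have hε : ∀ᶠ ε in 𝓝[>] (0 : ℝ), 0 < ε ∧
      ∀ y ∈ I₁ ∪ I₂, ball (T.1 y) ε ⊆ t₁ y ∧ ball (T.1.adjoint y) ε ⊆ t₂ y :=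
    eventually_mem_nhdsWithin.and ((Finset.eventually_all _).2 fun y _ =>
      (hball (ht₁ y)).and (hball (ht₂ y)))
  obtain ⟨ε, hε₀, hεt⟩ := hε.exists
  obtain ⟨S, hSs, hS⟩ := h (I₁ ∪ I₂) ε hε₀
  refine ⟨S, huV (hu ⟨hI₁ fun y hy => ?_, hI₂ fun y hy => ?_⟩), hSs⟩
  · have hy' : y ∈ I₁ ∪ I₂ := Finset.mem_union_left _ hy
    exact (hεt y hy').1 (hS y hy').1
  · have hy' : y ∈ I₁ ∪ I₂ := Finset.mem_union_right _ hy
    exact (hεt y hy').2 (hS y hy').2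

theorem isClosed_setOf_exists_eigenvector_mem_closedBall (y : H) (r : ℝ) :
    IsClosed {T : {T : H →L[ℂ] H // ‖T‖ ≤ M} |
      ∃ x ∈ closedBall y r, ∃ c ∈ closedBall (0 : ℂ) M, T.1 x = c • x} := by
  let K : Set (WeakDual ℂ H × ℂ) :=
    (WeakDual.toStrongDual ⁻¹' closedBall (InnerProductSpace.toDual ℂ H y) r) ×ˢ closedBall 0 M
  have : CompactSpace K := isCompact_iff_compactSpace.1
    ((WeakDual.isCompact_closedBall _ _).prod (isCompact_closedBall _ _))
  have hK (k : K) : ‖WeakDual.toStrongDual k.1.1‖ ≤ ‖y‖ + r := by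
    simpa using norm_le_of_mem_closedBall k.2.1
  let C : Set ({T : H →L[ℂ] H // ‖T‖ ≤ M} × K) :=
    {p | ∀ z, p.2.1.1 (p.1.1.adjoint z) = starRingEnd ℂ p.2.1.2 * p.2.1.1 z}
  have hC : IsClosed C := by
    simp only [C, ofPred_forall]
    refine isClosed_iInter fun z => isClosed_eq ?_ ?_
    · exact (WeakDual.continuousOn_apply_of_norm_le (continuous_sotStar_adjoint_apply z)
        (‖y‖ + r)).comp_continuous (continuous_fst.prodMk
          (continuous_fst.comp (continuous_subtype_val.comp continuous_snd))) fun p => hK p.2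
    · have hk : Continuous fun p : {T : H →L[ℂ] H // ‖T‖ ≤ M} × K => p.2.1 :=
        continuous_subtype_val.comp continuous_snd
      exact (Complex.continuous_conj.comp (continuous_snd.comp hk)).mul
        ((WeakDual.eval_continuous z).comp (continuous_fst.comp hk))
  convert isClosedMap_fst_of_compactSpace C hC using 1
  ext T
  constructor
  · rintro ⟨x, hx, c, hc, hTx⟩
    refine ⟨(T, ⟨(InnerProductSpace.toDual ℂ H x, c), ?_, hc⟩), fun z => ?_, rfl⟩
    · show dist (InnerProductSpace.toDual ℂ H x) (InnerProductSpace.toDual ℂ H y) ≤ r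
      rwa [LinearIsometryEquiv.dist_map]
    · show ⟪x, T.1.adjoint z⟫_ℂ = starRingEnd ℂ c * ⟪x, z⟫_ℂ
      rw [ContinuousLinearMap.adjoint_inner_right, hTx, inner_smul_left]
  · rintro ⟨⟨T, ⟨φ, c⟩, hφ, hc⟩, hTC, rfl⟩
    set x := (InnerProductSpace.toDual ℂ H).symm (WeakDual.toStrongDual φ)
    have hxφ (w : H) : ⟪x, w⟫_ℂ = φ w := by
      rw [← InnerProductSpace.toDual_apply_apply, LinearIsometryEquiv.apply_symm_apply]
      rfl
    refine ⟨x, ?_, c, hc, ext_inner_right ℂ fun z => ?_⟩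
    · rw [mem_closedBall, ← (InnerProductSpace.toDual ℂ H).dist_map,
        LinearIsometryEquiv.apply_symm_apply]
      exact hφ
    · rw [← ContinuousLinearMap.adjoint_inner_right, inner_smul_left, hxφ, hxφ]
      exact hTC z

theorem isGδ_setOf_noEigenvalue [TopologicalSpace.SeparableSpace H] :
    IsGδ {T : {T : H →L[ℂ] H // ‖T‖ ≤ M} | ∀ (c : ℂ) (x : H), T.1 x = c • x → x = 0} := by
  obtain ⟨D, hDc, hD⟩ := TopologicalSpace.exists_countable_dense H
  have hG : {T : {T : H →L[ℂ] H // ‖T‖ ≤ M} | ∀ (c : ℂ) (x : H), T.1 x = c • x → x = 0} =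
      ⋂ y ∈ D \ {0}, {T | ∃ x ∈ closedBall y (‖y‖ / 2), ∃ c ∈ closedBall (0 : ℂ) M,
        T.1 x = c • x}ᶜ := by
    ext T
    simp only [mem_iInter, mem_compl_iff, mem_ofPred_eq]
    constructor
    · rintro hT y ⟨-, hy⟩ ⟨x, hx, c, -, hTx⟩
      obtain rfl := hT c x hTx
      rw [mem_closedBall, dist_zero_left] at hx
      exact hy (norm_le_zero_iff.1 (by linarith))
    · intro hT c x hTx
      by_contra hx₀
      obtain ⟨y, hxy, hyD⟩ := Metric.dense_iff.1 hD x (‖x‖ / 3) (by positivity)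
      rw [mem_ball, dist_comm, dist_eq_norm] at hxy
      have hxy' : ‖x‖ ≤ ‖y‖ + ‖x - y‖ := norm_le_insert' x y
      refine hT y ⟨hyD, fun hy => ?_⟩ ⟨x, ?_, c, ?_, hTx⟩
      · rw [mem_singleton_iff] at hy
        simp [hy] at hxy
        linarith [norm_pos_iff.2 hx₀]
      · rw [mem_closedBall, dist_eq_norm]
        linarith
      · exact mem_closedBall_zero_iff.2 ((T.1.norm_le_of_apply_eq_smul hTx hx₀).trans T.2)
  rw [hG]
  exact .biInter (hDc.mono sdiff_subset) fun y _ =>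
    (isClosed_setOf_exists_eigenvector_mem_closedBall y _).isOpen_compl.isGδ

theorem dense_setOf_noEigenvalue [TopologicalSpace.SeparableSpace H]
    (hH : ¬ FiniteDimensional ℂ H) (hM : 0 < M) :
    Dense {T : {T : H →L[ℂ] H // ‖T‖ ≤ M} | ∀ (c : ℂ) (x : H), T.1 x = c • x → x = 0} :=
  fun T => mem_closure_sotStar fun J ε hε => by
    obtain ⟨S, hSM, hS, hSJ⟩ := exists_noEigenvalue_approx hH hM T.2 J hε
    exact ⟨⟨S, hSM⟩, hS, hSJ⟩

end SotStar

theorem statement4 {H : Type*} [NormedAddCommGroup H] [InnerProductSpace ℂ H]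
    [CompleteSpace H] [TopologicalSpace.SeparableSpace H]
    (hdim : ¬ FiniteDimensional ℂ H) (M : ℝ) (hM : 1 < M) :
    @Dense _ (sotStar (H := H) M)
        {T : {T : H →L[ℂ] H // ‖T‖ ≤ M} | ∀ (c : ℂ) (x : H), T.1 x = c • x → x = 0} ∧
    @IsGδ _ (sotStar (H := H) M)
        {T : {T : H →L[ℂ] H // ‖T‖ ≤ M} | ∀ (c : ℂ) (x : H), T.1 x = c • x → x = 0} :=
  ⟨dense_setOf_noEigenvalue hdim (zero_lt_one.trans hM), isGδ_setOf_noEigenvalue⟩
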